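/- arXiv:2411.10188 — 4 statements merged into one kernel-verified Lean document; each statement's English description precedes it below -/
import Mathlib

section
/- Let Σ be a finite alphabet, p ∈ Σ* a fixed word, and L = p·Σ⁺ (the set of all words strictly extending p). If u is a prefix of p and u' is syntactically congruent to u with respect to L (i.e., for all x, y ∈ Σ*, xuy ∈ L ↔ xu'y ∈ L), then u = u'. -/
/-- Syntactic congruence of a language `L ⊆ Σ*`. -/
def SynCong {α : Type*} (L : Set (List α)) (u v : List α) : Prop :=
  ∀ x y : List α, (x ++ u ++ y) ∈ L ↔ (x ++ v ++ y) ∈ L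

/-- `p·Σ⁺`: words strictly extending `p`. -/
def plusLang {α : Type*} (p : List α) : Set (List α) :=
  {w | ∃ s : List α, s ≠ [] ∧ w = p ++ s}

/-- `p·Σ^{≥2}`: words extending `p` by at least two letters. -/
def geTwoLang {α : Type*} (p : List α) : Set (List α) :=
  {w | ∃ s : List α, 2 ≤ s.length ∧ w = p ++ s}

/-- `w·Σ*`: words having `w` as a prefix. -/
def starLang {α : Type*} (w : List α) : Set (List α) :=
  {u | ∃ s : List α, u = w ++ s}

/-!
Complete `u` to `p = u ++ t`. Appending `t` and one more letter `a` to `u` lands in `p·Σ⁺`,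
appending only `t` does not, and the congruence transfers both facts to `u'`. The only word
`w` with `w ∉ p·Σ⁺` but `w ++ [a] ∈ p·Σ⁺` is `p` itself, so `u' ++ t = u ++ t`.
-/

theorem SynCong.append_mem_iff {α : Type*} {L : Set (List α)} {u v : List α}
    (h : SynCong L u v) (y : List α) : u ++ y ∈ L ↔ v ++ y ∈ L := by
  simpa using h [] y

namespace plusLang

variable {α : Type*} {p : List α}

theorem append_mem {s : List α} (hs : s ≠ []) : p ++ s ∈ plusLang p :=
  ⟨s, hs, rfl⟩

theorem self_notMem : p ∉ plusLang p := by
  rintro ⟨s, hs, h⟩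
  exact hs (by simpa using h)

theorem eq_of_concat_mem_of_notMem {w : List α} {a : α}
    (hwa : w ++ [a] ∈ plusLang p) (hw : w ∉ plusLang p) : w = p := by
  obtain ⟨s, hs, hwas⟩ := hwa
  obtain ⟨s', b, rfl⟩ := (List.eq_nil_or_concat s).resolve_left hs
  have hw_eq : w = p ++ s' := by
    rw [List.concat_eq_append, ← List.append_assoc] at hwas
    exact (List.append_inj' hwas rfl).1
  have hs' : s' = [] := by
    by_contra hs'
    exact hw (hw_eq ▸ append_mem hs')
  simpa [hs'] using hw_eq

end plusLang

theorem stmt0_general {α : Type*} [Nonempty α] (p u u' : List α)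
    (hu : u <+: p) (hcong : SynCong (plusLang p) u u') : u = u' := by
  obtain ⟨t, rfl⟩ := hu
  obtain ⟨a⟩ := ‹Nonempty α›
  have hlong : u' ++ t ++ [a] ∈ plusLang (u ++ t) := by
    simpa using (hcong.append_mem_iff (t ++ [a])).1
      (by simpa using plusLang.append_mem (p := u ++ t) (List.cons_ne_nil a []))
  have hshort : u' ++ t ∉ plusLang (u ++ t) := fun h =>
    plusLang.self_notMem ((hcong.append_mem_iff t).2 h)
  exact (List.append_cancel_right (plusLang.eq_of_concat_mem_of_notMem hlong hshort)).symm

theorem stmt0 {α : Type*} [Fintype α] [Nonempty α] (p u u' : List α)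
    (hu : u <+: p) (hcong : SynCong (plusLang p) u u') : u = u' :=
  stmt0_general p u u' hu hcong
end

section
/- Let Σ be a finite alphabet, p ∈ Σ* a fixed word, and L = p·Σ^{≥2} (words extending p by at least two letters). If u is a prefix of p and u ∼_L u' (syntactic congruence with respect to L), then u = u'. -/
theorem mem_geTwoLang_iff {α : Type*} {p w : List α} :
    w ∈ geTwoLang p ↔ p <+: w ∧ p.length + 2 ≤ w.length := by
  constructor
  · rintro ⟨s, hs, rfl⟩
    exact ⟨List.prefix_append p s, by simpa using hs⟩
  · rintro ⟨⟨s, rfl⟩, hlen⟩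
    exact ⟨s, by simpa using hlen, rfl⟩

theorem eq_of_append_pair_mem_geTwoLang {α : Type*} {p v : List α} {a : α}
    (hmem : v ++ [a, a] ∈ geTwoLang p) (hnot : v ++ [a] ∉ geTwoLang p) : v = p := by
  obtain ⟨hpre, hlen⟩ := mem_geTwoLang_iff.mp hmem
  have hle : p.length ≤ v.length := by simpa using hlen
  have hpv : p <+: v := List.prefix_of_prefix_length_le hpre (List.prefix_append v _) hle
  have hge : v.length ≤ p.length := by
    by_contra! hlt
    refine hnot (mem_geTwoLang_iff.mpr ⟨hpv.trans (List.prefix_append v _), ?_⟩)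
    simp only [List.length_append, List.length_cons, List.length_nil]
    omega
  exact (hpv.eq_of_length (le_antisymm hle hge)).symm

theorem stmt1_general {α : Type*} [Nonempty α] (p u u' : List α)
    (hu : u <+: p) (hcong : SynCong (geTwoLang p) u u') : u = u' := by
  obtain ⟨t, rfl⟩ := hu
  obtain ⟨a⟩ := ‹Nonempty α›
  have hmem : u' ++ (t ++ [a, a]) ∈ geTwoLang (u ++ t) :=
    (hcong.append_mem_iff _).mp <| mem_geTwoLang_iff.mpr ⟨by simp, by
      simp only [List.length_append, List.length_cons, List.length_nil]
      omega⟩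
  have hnot : u' ++ (t ++ [a]) ∉ geTwoLang (u ++ t) := fun h ↦ by
    have := (mem_geTwoLang_iff.mp ((hcong.append_mem_iff _).mpr h)).2
    simp only [List.length_append, List.length_cons, List.length_nil] at this
    omega
  rw [← List.append_assoc] at hmem hnot
  exact (List.append_cancel_right (eq_of_append_pair_mem_geTwoLang hmem hnot)).symm

theorem stmt1 {α : Type*} [Fintype α] [Nonempty α] (p u u' : List α)
    (hu : u <+: p) (hcong : SynCong (geTwoLang p) u u') : u = u' :=
  stmt1_general p u u' hu hcong
end

section
/- For L = p·Σ⁺ over a finite alphabet Σ and any prefix u of p, the preimage under the syntactic morphism of the syntactic image of u is the singleton {u}; i.e., the congruence class of u under ∼_L is {u}. -/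
theorem stmt3 {α : Type*} [Fintype α] [Nonempty α] (p u : List α)
    (hu : u <+: p) :
    {v : List α | SynCong (plusLang p) u v} = {u} := by
  obtain ⟨t, ht⟩ := hu
  obtain ⟨a⟩ := ‹Nonempty α›
  ext v
  simp only [Set.mem_setOf_eq, Set.mem_singleton_iff]
  constructor
  · intro hc
    -- p ∉ L
    have hpnot : p ∉ plusLang p := by
      rintro ⟨s, hs, hps⟩
      have : s = [] := by
        have := hps
        nth_rewrite 1 [← List.append_nil p] at this
        exact (List.append_cancel_left this).symm
      exact hs this
    have h1 : ([] ++ u ++ (t ++ [a])) ∈ plusLang p := by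
      refine ⟨[a], by simp, ?_⟩
      simp [← ht]
    have h2 : ([] ++ v ++ (t ++ [a])) ∈ plusLang p := (hc [] (t ++ [a])).1 h1
    have h3 : ([] ++ v ++ t) ∉ plusLang p := by
      intro h
      exact hpnot (by have h4 := (hc [] t).2 (by simpa using h); simpa [ht] using h4)
    obtain ⟨s, hs, hvs⟩ := h2
    simp only [List.nil_append] at hvs h3
    have hsne : s ≠ [] := hs
    have hsd : s = s.dropLast ++ [s.getLast hsne] := (List.dropLast_append_getLast hsne).symm
    rw [hsd, ← List.append_assoc] at hvs
    rw [← List.append_assoc] at hvs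
    have hlast : v ++ t = p ++ s.dropLast ∧ [a] = [s.getLast hsne] :=
      List.append_inj' hvs (by simp)
    have hdrop : s.dropLast = [] := by
      by_contra hne
      exact h3 ⟨s.dropLast, hne, hlast.1⟩
    have : v ++ t = u ++ t := by
      rw [hlast.1, hdrop, List.append_nil, ← ht]
    exact List.append_cancel_right this
  · rintro rfl
    intro x y
    rfl
end

section
/- Let L = p·Σ⁺ and suppose d ∼_L d'. Then d = p if and only if d' = p. -/
theorem stmt10 {α : Type*} [Fintype α] [Nonempty α] (p d d' : List α)
    (hcong : SynCong (plusLang p) d d') :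
    d = p ↔ d' = p := by
  have key : ∀ u v : List α, SynCong (plusLang p) u v → u = p → v = p := by
    intro u v hc hu
    obtain ⟨a⟩ := ‹Nonempty α›
    -- v ∉ plusLang p (from empty contexts)
    have hnv : v ∉ plusLang p := by
      intro hv
      have := (hc [] []).2 (by simpa using hv)
      simp [hu, plusLang] at this
    -- v ++ [a] ∈ plusLang p
    have hva : v ++ [a] ∈ plusLang p := by
      have : ([] : List α) ++ u ++ [a] ∈ plusLang p := by
        simp only [hu, plusLang, List.nil_append, Set.mem_setOf_eq]
        exact ⟨[a], by simp, rfl⟩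
      have := (hc [] [a]).1 this
      simpa using this
    obtain ⟨s, hs, hvs⟩ := hva
    -- s = s.dropLast ++ [s.getLast hs]
    have hsplit : s = s.dropLast ++ [s.getLast hs] := (List.dropLast_append_getLast hs).symm
    rw [hsplit, ← List.append_assoc] at hvs
    have hinj := List.append_inj' hvs (by simp)
    have hv : v = p ++ s.dropLast := hinj.1
    by_cases hd : s.dropLast = []
    · simpa [hd] using hv
    · exact absurd ⟨s.dropLast, hd, hv⟩ hnv
  constructor
  · exact key d d' hcong
  · exact key d' d (fun x y => (hcong x y).symm)
end
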